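/- Define vector fields on C^3 (coordinates x, y, u) by e1 = -x∂x + y∂y, e2 = (u-2)∂x - 2y∂u, e3 = (u-2)∂y - 2x∂u. Then [e1,e2] = e2, [e1,e3] = -e3, and [e2,e3] = -2*e1; in particular e1, e2, e3 span a Lie algebra isomorphic to sl(2,C). -/
import Mathlib

/-- Lie bracket of vector fields on ℂ³, viewed as smooth maps ℂ³ → ℂ³:
`[V,W](p) = DW(p)(V(p)) - DV(p)(W(p))`. -/
noncomputable def lieBracket (V W : ℂ × ℂ × ℂ → ℂ × ℂ × ℂ) :
    ℂ × ℂ × ℂ → ℂ × ℂ × ℂ :=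
  fun p => fderiv ℂ W p (V p) - fderiv ℂ V p (W p)

/-- `e1 = -x∂x + y∂y`. -/
noncomputable def e1 : ℂ × ℂ × ℂ → ℂ × ℂ × ℂ := fun p => (-p.1, p.2.1, 0)

/-- `e2 = (u-2)∂x - 2y∂u`. -/
noncomputable def e2 : ℂ × ℂ × ℂ → ℂ × ℂ × ℂ :=
  fun p => (p.2.2 - 2, 0, -2 * p.2.1)

/-- `e3 = (u-2)∂y - 2x∂u`. -/
noncomputable def e3 : ℂ × ℂ × ℂ → ℂ × ℂ × ℂ :=
  fun p => (0, p.2.2 - 2, -2 * p.1)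

noncomputable def px : ℂ × ℂ × ℂ →L[ℂ] ℂ := ContinuousLinearMap.fst ℂ ℂ (ℂ × ℂ)
noncomputable def py : ℂ × ℂ × ℂ →L[ℂ] ℂ :=
  (ContinuousLinearMap.fst ℂ ℂ ℂ).comp (ContinuousLinearMap.snd ℂ ℂ (ℂ × ℂ))
noncomputable def pu : ℂ × ℂ × ℂ →L[ℂ] ℂ :=
  (ContinuousLinearMap.snd ℂ ℂ ℂ).comp (ContinuousLinearMap.snd ℂ ℂ (ℂ × ℂ))

noncomputable def A1 : ℂ × ℂ × ℂ →L[ℂ] ℂ × ℂ × ℂ := (-px).prod (py.prod 0)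
noncomputable def A2 : ℂ × ℂ × ℂ →L[ℂ] ℂ × ℂ × ℂ := pu.prod ((0 : ℂ × ℂ × ℂ →L[ℂ] ℂ).prod ((-2 : ℂ) • py))
noncomputable def A3 : ℂ × ℂ × ℂ →L[ℂ] ℂ × ℂ × ℂ := (0 : ℂ × ℂ × ℂ →L[ℂ] ℂ).prod (pu.prod ((-2 : ℂ) • px))

lemma fd1 (p : ℂ × ℂ × ℂ) : fderiv ℂ e1 p = A1 := by
  have h : HasFDerivAt e1 A1 p := by
    have h1 : e1 = fun q => A1 q := by
      ext q <;> simp [e1, A1, px, py, pu]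
    rw [h1]; exact A1.hasFDerivAt
  exact h.fderiv

lemma fd2 (p : ℂ × ℂ × ℂ) : fderiv ℂ e2 p = A2 := by
  have h : HasFDerivAt e2 A2 p := by
    have h2 : e2 = fun q => A2 q + ((-2 : ℂ), 0, 0) := by
      ext q <;> simp [e2, A2, px, py, pu] <;> ring
    rw [h2]
    exact (A2.hasFDerivAt (x := p)).add_const _
  exact h.fderiv

lemma fd3 (p : ℂ × ℂ × ℂ) : fderiv ℂ e3 p = A3 := by
  have h : HasFDerivAt e3 A3 p := by
    have h3 : e3 = fun q => A3 q + (0, (-2 : ℂ), 0) := by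
      ext q <;> simp [e3, A3, px, py, pu] <;> ring
    rw [h3]
    exact (A3.hasFDerivAt (x := p)).add_const _
  exact h.fderiv

theorem sl2_bracket_relations :
    lieBracket e1 e2 = e2 ∧
    (lieBracket e1 e3 = fun p => -(e3 p)) ∧
    (lieBracket e2 e3 = fun p => (-2 : ℂ) • e1 p) := by
  refine ⟨?_, ?_, ?_⟩ <;> funext p <;>
    simp [lieBracket, fd1, fd2, fd3, A1, A2, A3, px, py, pu, e1, e2, e3,
      Prod.ext_iff]
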